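/- Fix κ ≥ 0 and let A ∈ C²(ℝ, M²) be a solution of the initial value problem Ä + κA = Λ(A,Ȧ)·cof A with data in D, such that t ↦ |A(t)| is nonconstant and T-periodic for some T > 0. Then for every positive integer N there exists ℓ ∈ {1,…,N²} (depending on N) such that |A(2ℓT + t) − A(t)| ≤ 8π|A(t)|/N for all t ∈ ℝ. -/

import Mathlib

/-! Writing `A = ½ (Re z • 1 + Im z • Z + Re w • K + Im w • M)`, the cofactor fixes `z` and negates
`w`, so the equation decouples into the planar central-force problems `z'' = (Λ - κ) z` and
`w'' = -(Λ + κ) w`, with `|A|² = (|z|² + |w|²) / 2` and `det A = (|z|² - |w|²) / 4`.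
The constraint `det A = 1` propagates (by Grönwall, since `det A - 1` satisfies a linear
second-order differential inequality), after which `(det Ȧ - κ) |A|²` is conserved, so
`Λ = c / |A|⁴` is `T`-periodic and so are `|z|` and `|w|`. A planar motion in a periodic central field with periodic radius
recurs up to a rotation, since angular momentum is conserved and radial velocity recurs:
`z (t + T) = u₁ z t`, `w (t + T) = u₂ w t` with `|uᵢ| = 1`. Dirichlet's simultaneous
approximation makes `u₁ ^ ℓ` and `u₂ ^ ℓ` both `2π / N`-close to `1` for some `ℓ ≤ N²`. -/

open Matrix

noncomputable section

/-- `M²`: the space of 2×2 real matrices. -/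
abbrev M2 : Type := Matrix (Fin 2) (Fin 2) ℝ

/-- Frobenius inner product `⟨A,B⟩ = tr(AᵀB)`. -/
def mip (A B : M2) : ℝ := (Aᵀ * B).trace

/-- Frobenius norm `|A| = ⟨A,A⟩^{1/2}`. -/
def fnorm (A : M2) : ℝ := Real.sqrt (mip A A)

/-- The matrix Z = [[0,−1],[1,0]]. -/
def Zm : M2 := !![0, -1; 1, 0]

/-- The matrix K = [[1,0],[0,−1]]. -/
def Km : M2 := !![1, 0; 0, -1]

/-- The matrix M = [[0,1],[1,0]]. -/
def Mm : M2 := !![0, 1; 1, 0]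

/-- Cofactor: cof [[a,b],[c,d]] = [[d,−c],[−b,a]]. -/
def cofm (A : M2) : M2 := !![A 1 1, -(A 1 0); -(A 0 1), A 0 0]

/-- Membership in SO(2,ℝ). -/
def isSO (U : M2) : Prop := U.det = 1 ∧ U⁻¹ = Uᵀ

/-- The rotation U(θ) = cos θ·I + sin θ·Z. -/
def Um (θ : ℝ) : M2 := Real.cos θ • (1 : M2) + Real.sin θ • Zm

/-- Invariant X₁(A,B) = ½|B|² + (κ/2)|A|². -/
def X1 (κ : ℝ) (A B : M2) : ℝ := (1/2) * mip B B + (κ/2) * mip A A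

/-- Invariant X₂(A,B) = ½⟨ZA − AZ, B⟩. -/
def X2 (A B : M2) : ℝ := (1/2) * mip (Zm * A - A * Zm) B

/-- Invariant X₃(A,B) = ½⟨ZA + AZ, B⟩. -/
def X3 (A B : M2) : ℝ := (1/2) * mip (Zm * A + A * Zm) B

/-- Lagrange multiplier Λ(A,B) = 2(κ − det B)/|A|². -/
def Lam (κ : ℝ) (A B : M2) : ℝ := 2 * (κ - B.det) / (mip A A)

attribute [local instance] Matrix.normedAddCommGroup Matrix.normedSpace

section Gronwall

open Set

variable {E : Type*} [NormedAddCommGroup E] [NormedSpace ℝ E]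

theorem eq_zero_of_norm_deriv_le_mul_of_le {f f' : ℝ → E} {C : ℝ → ℝ} {t₀ t : ℝ}
    (hf : ∀ t, HasDerivAt f (f' t) t) (hC : Continuous C) (hle : ∀ t, ‖f' t‖ ≤ C t * ‖f t‖)
    (h₀ : f t₀ = 0) (ht : t₀ ≤ t) : f t = 0 := by
  obtain ⟨K, hK⟩ := isCompact_Icc.exists_bound_of_continuousOn (hC.continuousOn (s := Icc t₀ t))
  have hbound : ∀ s ∈ Ico t₀ t, ‖f' s‖ ≤ K * ‖f s‖ + 0 := fun s hs => by
    rw [add_zero]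
    exact (hle s).trans (mul_le_mul_of_nonneg_right
      ((le_abs_self _).trans (hK s (Ico_subset_Icc_self hs))) (norm_nonneg _))
  have := norm_le_gronwallBound_of_norm_deriv_right_le (δ := 0)
    (fun s _ => (hf s).continuousAt.continuousWithinAt) (fun s _ => (hf s).hasDerivWithinAt)
    (by simp [h₀]) hbound t ⟨ht, le_rfl⟩
  rwa [gronwallBound_ε0_δ0, norm_le_zero_iff] at this

theorem eq_zero_of_norm_deriv_le_mul {f f' : ℝ → E} {C : ℝ → ℝ} {t₀ : ℝ}
    (hf : ∀ t, HasDerivAt f (f' t) t) (hC : Continuous C) (hle : ∀ t, ‖f' t‖ ≤ C t * ‖f t‖)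
    (h₀ : f t₀ = 0) (t : ℝ) : f t = 0 := by
  rcases le_total t₀ t with ht | ht
  · exact eq_zero_of_norm_deriv_le_mul_of_le hf hC hle h₀ ht
  · have hf_neg : ∀ s, HasDerivAt (fun s => f (-s)) (-f' (-s)) s := fun s => by
      simpa [Function.comp_def] using (hf (-s)).scomp s (hasDerivAt_neg s)
    simpa using eq_zero_of_norm_deriv_le_mul_of_le (t₀ := -t₀) hf_neg (hC.comp continuous_neg)
      (fun s => by simpa using hle (-s)) (by simpa using h₀) (neg_le_neg ht)

theorem eq_zero_of_norm_deriv2_le_mul {w w' w'' : ℝ → E} {C : ℝ → ℝ} {t₀ : ℝ}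
    (hw : ∀ t, HasDerivAt w (w' t) t) (hw' : ∀ t, HasDerivAt w' (w'' t) t) (hC : Continuous C)
    (hle : ∀ t, ‖w'' t‖ ≤ C t * ‖w t‖) (h₀ : w t₀ = 0) (h₀' : w' t₀ = 0) (t : ℝ) : w t = 0 := by
  have hbound : ∀ t, ‖(w' t, w'' t)‖ ≤ (1 + |C t|) * ‖(w t, w' t)‖ := fun t => by
    have h₁ : ‖w t‖ ≤ ‖(w t, w' t)‖ := norm_fst_le (w t, w' t)
    have h₂ : ‖w' t‖ ≤ ‖(w t, w' t)‖ := norm_snd_le (w t, w' t)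
    have h₃ : C t * ‖w t‖ ≤ |C t| * ‖(w t, w' t)‖ :=
      mul_le_mul (le_abs_self _) h₁ (norm_nonneg _) (abs_nonneg _)
    rw [Prod.norm_def]
    refine max_le ?_ ?_ <;> nlinarith [hle t, abs_nonneg (C t), norm_nonneg (w t, w' t)]
  have := eq_zero_of_norm_deriv_le_mul (t₀ := t₀) (fun t => (hw t).prodMk (hw' t))
    (continuous_const.add hC.abs) hbound (by simp [h₀, h₀']) t
  exact congrArg Prod.fst this

end Gronwall

section CentralForce

open Function ComplexConjugate

variable {z z' : ℝ → ℂ} {μ : ℝ → ℝ} {T : ℝ}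

theorem im_conj_mul_deriv_const (hz : ∀ t, HasDerivAt z (z' t) t)
    (hz' : ∀ t, HasDerivAt z' (μ t • z t) t) (s t : ℝ) :
    (conj (z s) * z' s).im = (conj (z t) * z' t).im := by
  have hderiv : ∀ t, HasDerivAt (fun t => (conj (z t) * z' t).im) 0 t := fun t => by
    have h : HasDerivAt (fun t => (conj (z t) * z' t).im)
        (conj (z' t) * z' t + conj (z t) * (μ t • z t)).im t :=
      Complex.imCLM.hasFDerivAt.comp_hasDerivAt t ((hz t).star.mul (hz' t))
    refine h.congr_deriv ?_
    simp only [Complex.real_smul, Complex.add_im, Complex.mul_im, Complex.mul_re, Complex.conj_re,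
      Complex.conj_im, Complex.ofReal_re, Complex.ofReal_im]
    ring
  exact is_const_of_deriv_eq_zero (fun t => (hderiv t).differentiableAt)
    (fun t => (hderiv t).deriv) s t

theorem conj_mul_deriv_periodic (hz : ∀ t, HasDerivAt z (z' t) t)
    (hz' : ∀ t, HasDerivAt z' (μ t • z t) t) (hnorm : Periodic (fun t => ‖z t‖) T) :
    Periodic (fun t => conj (z t) * z' t) T := fun t => by
  have hsq : ∀ t, HasDerivAt (fun t => ‖z t‖ ^ 2) (2 * inner ℝ (z t) (z' t)) t :=
    fun t => (hz t).norm_sq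
  have hre : inner ℝ (z (t + T)) (z' (t + T)) = inner ℝ (z t) (z' t) := by
    have h := (hsq (t + T)).comp_add_const t T
    have hshift : (fun s => ‖z (s + T)‖ ^ 2) = fun s => ‖z s‖ ^ 2 :=
      funext fun s => congrArg (· ^ 2) (hnorm s)
    rw [hshift] at h
    simpa using h.unique (hsq t)
  apply Complex.ext
  · simpa [Complex.inner, mul_comm] using hre
  · exact im_conj_mul_deriv_const hz hz' _ _

theorem exists_norm_eq_one_mul_of_periodic (hz : ∀ t, HasDerivAt z (z' t) t)
    (hz' : ∀ t, HasDerivAt z' (μ t • z t) t) (hμ : Continuous μ) (hμT : Periodic μ T)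
    (hnorm : Periodic (fun t => ‖z t‖) T) : ∃ u : ℂ, ‖u‖ = 1 ∧ ∀ t, z (t + T) = u * z t := by
  by_cases hzero : ∀ t, z t = 0
  · exact ⟨1, norm_one, fun t => by simp [hzero]⟩
  obtain ⟨t₀, ht₀⟩ := not_forall.1 hzero
  set u := z (t₀ + T) / z t₀
  have hu : ‖u‖ = 1 := by
    rw [norm_div, show ‖z (t₀ + T)‖ = ‖z t₀‖ from hnorm t₀, div_self (norm_ne_zero_iff.2 ht₀)]
  have hz₀ : z (t₀ + T) = u * z t₀ := (div_mul_cancel₀ _ ht₀).symm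
  -- `conj z * z'` recurs, so the velocity at `t₀` is rotated by the same `u` as the position
  have hz₀' : z' (t₀ + T) = u * z' t₀ := by
    have h := conj_mul_deriv_periodic hz hz' hnorm t₀
    simp only [hz₀, map_mul] at h
    have hconj : conj u * z' (t₀ + T) = z' t₀ :=
      mul_left_cancel₀ ((map_ne_zero conj).2 ht₀) (by linear_combination h)
    have hunit : u * conj u = 1 := by
      rw [Complex.mul_conj', hu]; norm_num
    linear_combination u * hconj - z' (t₀ + T) * hunit
  have hdiff := eq_zero_of_norm_deriv2_le_mul (t₀ := t₀) (C := fun t => |μ t|)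
    (w := fun t => z (t + T) - u * z t) (w' := fun t => z' (t + T) - u * z' t)
    (w'' := fun t => μ t • (z (t + T) - u * z t))
    (fun t => ((hz (t + T)).comp_add_const t T).sub ((hz t).const_mul u))
    (fun t => by
      have h := ((hz' (t + T)).comp_add_const t T).sub ((hz' t).const_mul u)
      rw [hμT t] at h
      refine h.congr_deriv ?_
      simp only [Complex.real_smul]
      ring)
    hμ.abs (fun t => by rw [norm_smul, Real.norm_eq_abs])
    (by simp [hz₀]) (by simp [hz₀'])
  exact ⟨u, hu, fun t => sub_eq_zero.1 (hdiff t)⟩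

theorem apply_add_nat_mul_of_apply_add {M : Type*} [Monoid M] {f : ℝ → M} {u : M}
    (h : ∀ t, f (t + T) = u * f t) (k : ℕ) (t : ℝ) : f (t + k * T) = u ^ k * f t := by
  induction k generalizing t with
  | zero => simp
  | succ k ih => rw [Nat.cast_succ, add_one_mul, ← add_assoc, h, ih, pow_succ', mul_assoc]

end CentralForce

section CircleApproximation

theorem exists_int_abs_nat_sub_mul_sub_le_of_floor_eq {γ : ℝ} {N j k : ℕ} (hN : 0 < N)
    (hjk : j ≤ k) (h : ⌊N * Int.fract (j * γ)⌋ = ⌊N * Int.fract (k * γ)⌋) :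
    ∃ m : ℤ, |((k - j : ℕ) : ℝ) * γ - m| ≤ 1 / N := by
  refine ⟨⌊k * γ⌋ - ⌊j * γ⌋, ?_⟩
  have hNpos : (0 : ℝ) < N := Nat.cast_pos.2 hN
  have hlt := Int.abs_sub_lt_one_of_floor_eq_floor h.symm
  rw [← mul_sub, abs_mul, abs_of_pos hNpos] at hlt
  have hdiff : ((k - j : ℕ) : ℝ) * γ - ((⌊k * γ⌋ - ⌊j * γ⌋ : ℤ) : ℝ)
      = Int.fract (k * γ) - Int.fract (j * γ) := by
    unfold Int.fract; push_cast [Nat.cast_sub hjk]; ring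
  rw [hdiff, le_div_iff₀ hNpos, mul_comm]
  exact hlt.le

theorem exists_nat_abs_mul_sub_int_le (α β : ℝ) {N : ℕ} (hN : 0 < N) :
    ∃ ℓ : ℕ, 1 ≤ ℓ ∧ ℓ ≤ N ^ 2 ∧
      (∃ m : ℤ, |ℓ * α - m| ≤ 1 / N) ∧ ∃ m : ℤ, |ℓ * β - m| ≤ 1 / N := by
  have hNpos : (0 : ℝ) < N := Nat.cast_pos.2 hN
  have hcell : ∀ (γ : ℝ) (k : ℕ), ⌊N * Int.fract (k * γ)⌋ ∈ Finset.Ico (0 : ℤ) N := fun γ k => by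
    rw [Finset.mem_Ico, Int.floor_nonneg, Int.floor_lt]
    push_cast
    exact ⟨mul_nonneg hNpos.le (Int.fract_nonneg _),
      mul_lt_of_lt_one_right hNpos (Int.fract_lt_one _)⟩
  have hcard : (Finset.Ico (0 : ℤ) N ×ˢ Finset.Ico (0 : ℤ) N).card
      < (Finset.range (N ^ 2 + 1)).card := by
    simp [sq]
  obtain ⟨j, hj, k, hk, hne, heq⟩ := Finset.exists_ne_map_eq_of_card_lt_of_maps_to hcard
    (f := fun k : ℕ => (⌊N * Int.fract (k * α)⌋, ⌊N * Int.fract (k * β)⌋))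
    (fun k _ => Finset.mem_product.2 ⟨hcell α k, hcell β k⟩)
  simp only [Prod.mk.injEq, Finset.mem_range] at heq hj hk
  wlog hjk : j < k generalizing j k
  · exact this k j hne.symm ⟨heq.1.symm, heq.2.symm⟩ hk hj (by omega)
  exact ⟨k - j, by omega, by omega,
    exists_int_abs_nat_sub_mul_sub_le_of_floor_eq hN hjk.le heq.1,
    exists_int_abs_nat_sub_mul_sub_le_of_floor_eq hN hjk.le heq.2⟩

theorem norm_pow_sub_one_le_of_abs_mul_arg_sub_le {u : ℂ} (hu : ‖u‖ = 1) {ℓ : ℕ} {m : ℤ} {ε : ℝ}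
    (h : |ℓ * (Complex.arg u / (2 * Real.pi)) - m| ≤ ε) : ‖u ^ ℓ - 1‖ ≤ 2 * Real.pi * ε := by
  have hu_exp : u = Complex.exp (Complex.arg u * Complex.I) := by
    simpa [hu] using (Complex.norm_mul_exp_arg_mul_I u).symm
  have hpow :
      u ^ ℓ = Complex.exp (Complex.I * ((ℓ * Complex.arg u - 2 * Real.pi * m : ℝ) : ℂ)) := by
    conv_lhs => rw [hu_exp]
    rw [← Complex.exp_nat_mul, ← mul_one (Complex.exp _), ← Complex.exp_int_mul_two_pi_mul_I (-m),
      ← Complex.exp_add]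
    congr 1; push_cast; ring
  have hfactor : ℓ * Complex.arg u - 2 * Real.pi * m
      = 2 * Real.pi * (ℓ * (Complex.arg u / (2 * Real.pi)) - m) := by
    field_simp
  rw [hpow]
  calc _ ≤ ‖ℓ * Complex.arg u - 2 * Real.pi * m‖ := Real.norm_exp_I_mul_ofReal_sub_one_le
    _ ≤ 2 * Real.pi * ε := by
      rw [hfactor, Real.norm_eq_abs, abs_mul, abs_of_pos Real.two_pi_pos]
      gcongr

theorem exists_pow_sub_one_norm_le {u₁ u₂ : ℂ} (h₁ : ‖u₁‖ = 1) (h₂ : ‖u₂‖ = 1) {N : ℕ}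
    (hN : 0 < N) : ∃ ℓ : ℕ, 1 ≤ ℓ ∧ ℓ ≤ N ^ 2 ∧
      ‖u₁ ^ ℓ - 1‖ ≤ 2 * Real.pi / N ∧ ‖u₂ ^ ℓ - 1‖ ≤ 2 * Real.pi / N := by
  obtain ⟨ℓ, hℓ₁, hℓN, ⟨m₁, hm₁⟩, ⟨m₂, hm₂⟩⟩ := exists_nat_abs_mul_sub_int_le
    (Complex.arg u₁ / (2 * Real.pi)) (Complex.arg u₂ / (2 * Real.pi)) hN
  refine ⟨ℓ, hℓ₁, hℓN, ?_, ?_⟩ <;> rw [← mul_one_div]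
  exacts [norm_pow_sub_one_le_of_abs_mul_arg_sub_le h₁ hm₁,
    norm_pow_sub_one_le_of_abs_mul_arg_sub_le h₂ hm₂]

theorem norm_pow_two_mul_sub_one_le {u : ℂ} (hu : ‖u‖ = 1) (ℓ : ℕ) :
    ‖u ^ (2 * ℓ) - 1‖ ≤ 2 * ‖u ^ ℓ - 1‖ := by
  have hsum : ‖u ^ ℓ + 1‖ ≤ 2 := by
    calc ‖u ^ ℓ + 1‖ ≤ ‖u ^ ℓ‖ + ‖(1 : ℂ)‖ := norm_add_le _ _
      _ = 2 := by rw [norm_pow, hu, one_pow, norm_one]; norm_num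
  rw [pow_mul', sq, mul_self_sub_one, norm_mul]
  exact mul_le_mul_of_nonneg_right hsum (norm_nonneg _)

theorem norm_apply_two_mul_add_sub_le {f : ℝ → ℂ} {u : ℂ} {T ε : ℝ} (hu : ‖u‖ = 1)
    (h : ∀ t, f (t + T) = u * f t) {ℓ : ℕ} (hε : ‖u ^ ℓ - 1‖ ≤ ε) (t : ℝ) :
    ‖f (2 * ℓ * T + t) - f t‖ ≤ 2 * ε * ‖f t‖ := by
  rw [show 2 * ℓ * T + t = t + (2 * ℓ : ℕ) * T by push_cast; ring,
    apply_add_nat_mul_of_apply_add h, ← sub_one_mul, norm_mul]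
  gcongr
  linarith [norm_pow_two_mul_sub_one_le hu ℓ]

end CircleApproximation

section ConformalParts

def confPart : M2 →L[ℝ] ℂ := LinearMap.toContinuousLinearMap
  { toFun := fun A => ⟨A 0 0 + A 1 1, A 1 0 - A 0 1⟩
    map_add' := fun A B => by
      apply Complex.ext <;> simp only [Matrix.add_apply, Complex.add_re, Complex.add_im] <;> ring
    map_smul' := fun c A => by
      apply Complex.ext <;>
        simp only [Matrix.smul_apply, smul_eq_mul, Real.ringHom_apply, Complex.real_smul,
          Complex.mul_re, Complex.mul_im, Complex.ofReal_re, Complex.ofReal_im, zero_mul, sub_zero,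
          add_zero] <;>
        ring }

def anticonfPart : M2 →L[ℝ] ℂ := LinearMap.toContinuousLinearMap
  { toFun := fun A => ⟨A 0 0 - A 1 1, A 0 1 + A 1 0⟩
    map_add' := fun A B => by
      apply Complex.ext <;> simp only [Matrix.add_apply, Complex.add_re, Complex.add_im] <;> ring
    map_smul' := fun c A => by
      apply Complex.ext <;>
        simp only [Matrix.smul_apply, smul_eq_mul, Real.ringHom_apply, Complex.real_smul,
          Complex.mul_re, Complex.mul_im, Complex.ofReal_re, Complex.ofReal_im, zero_mul, sub_zero,
          add_zero] <;>
        ring }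

@[simp] theorem confPart_re (A : M2) : (confPart A).re = A 0 0 + A 1 1 := rfl
@[simp] theorem confPart_im (A : M2) : (confPart A).im = A 1 0 - A 0 1 := rfl
@[simp] theorem anticonfPart_re (A : M2) : (anticonfPart A).re = A 0 0 - A 1 1 := rfl
@[simp] theorem anticonfPart_im (A : M2) : (anticonfPart A).im = A 0 1 + A 1 0 := rfl

theorem confPart_cofm (A : M2) : confPart (cofm A) = confPart A := by
  apply Complex.ext <;>
    simp only [cofm, confPart_re, confPart_im, of_apply, cons_val', cons_val_zero, cons_val_fin_one,
      cons_val_one] <;>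
    ring

theorem anticonfPart_cofm (A : M2) : anticonfPart (cofm A) = -anticonfPart A := by
  apply Complex.ext <;> simp [cofm]

theorem mip_apply (A B : M2) :
    mip A B = A 0 0 * B 0 0 + A 0 1 * B 0 1 + A 1 0 * B 1 0 + A 1 1 * B 1 1 := by
  simp only [mip, trace_fin_two, Matrix.mul_apply, transpose_apply, Fin.sum_univ_two]
  ring

theorem mip_cofm (A B : M2) : mip B (cofm A) =
    (inner ℝ (confPart A) (confPart B) - inner ℝ (anticonfPart A) (anticonfPart B)) / 2 := by
  simp only [cofm, mip_apply, of_apply, cons_val', cons_val_zero, cons_val_fin_one, cons_val_one,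
    Complex.inner, Complex.mul_re, confPart_re, Complex.conj_re, confPart_im, Complex.conj_im,
    anticonfPart_re, anticonfPart_im]
  ring

theorem mip_self (A : M2) : mip A A = (‖confPart A‖ ^ 2 + ‖anticonfPart A‖ ^ 2) / 2 := by
  simp only [mip_apply, Complex.sq_norm, Complex.normSq_apply, confPart_re, confPart_im,
    anticonfPart_re, anticonfPart_im]
  ring

theorem det_eq_norm_sq_sub_norm_sq (A : M2) :
    A.det = (‖confPart A‖ ^ 2 - ‖anticonfPart A‖ ^ 2) / 4 := by
  simp only [det_fin_two, Complex.sq_norm, Complex.normSq_apply, confPart_re, confPart_im,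
    anticonfPart_re, anticonfPart_im]
  ring

theorem fnorm_le_of_norm_parts_le {X Y : M2} {ε : ℝ} (hε : 0 ≤ ε)
    (hconf : ‖confPart Y‖ ≤ ε * ‖confPart X‖) (hanti : ‖anticonfPart Y‖ ≤ ε * ‖anticonfPart X‖) :
    fnorm Y ≤ ε * fnorm X := by
  rw [fnorm, fnorm, ← Real.sqrt_sq hε, ← Real.sqrt_mul (sq_nonneg ε), mip_self, mip_self]
  gcongr
  nlinarith [pow_le_pow_left₀ (norm_nonneg _) hconf 2, pow_le_pow_left₀ (norm_nonneg _) hanti 2]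

theorem Lam_mul_eq {κ : ℝ} {A : M2} (B : M2) (hA : ‖confPart A‖ ^ 2 + ‖anticonfPart A‖ ^ 2 ≠ 0) :
    Lam κ A B * (‖confPart A‖ ^ 2 + ‖anticonfPart A‖ ^ 2)
      = 4 * κ - ‖confPart B‖ ^ 2 + ‖anticonfPart B‖ ^ 2 := by
  rw [Lam, mip_self, det_eq_norm_sq_sub_norm_sq]
  field_simp
  ring

end ConformalParts

section Decoupled

open Function

variable {κ : ℝ} {Λ : ℝ → ℝ} {z z' w w' : ℝ → ℂ}

theorem norm_sq_sub_norm_sq_eq_four (hz : ∀ t, HasDerivAt z (z' t) t)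
    (hz' : ∀ t, HasDerivAt z' ((Λ t - κ) • z t) t) (hw : ∀ t, HasDerivAt w (w' t) t)
    (hw' : ∀ t, HasDerivAt w' ((-Λ t - κ) • w t) t)
    (hΛ : ∀ t, ‖z t‖ ^ 2 + ‖w t‖ ^ 2 ≠ 0 →
      Λ t * (‖z t‖ ^ 2 + ‖w t‖ ^ 2) = 4 * κ - ‖z' t‖ ^ 2 + ‖w' t‖ ^ 2)
    {t₀ : ℝ} (h₀ : ‖z t₀‖ ^ 2 - ‖w t₀‖ ^ 2 = 4)
    (h₀' : inner ℝ (z t₀) (z' t₀) = inner ℝ (w t₀) (w' t₀)) (t : ℝ) :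
    ‖z t‖ ^ 2 - ‖w t‖ ^ 2 = 4 := by
  have hD : ∀ t, HasDerivAt (fun t => ‖z t‖ ^ 2 - ‖w t‖ ^ 2 - 4)
      (2 * (inner ℝ (z t) (z' t) - inner ℝ (w t) (w' t))) t := fun t =>
    (((hz t).norm_sq.sub (hw t).norm_sq).sub_const 4).congr_deriv (by ring)
  have hD' : ∀ t, HasDerivAt (fun t => 2 * (inner ℝ (z t) (z' t) - inner ℝ (w t) (w' t)))
      (2 * (‖z' t‖ ^ 2 + (Λ t - κ) * ‖z t‖ ^ 2 - ‖w' t‖ ^ 2 + (Λ t + κ) * ‖w t‖ ^ 2)) t :=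
    fun t => by
      refine ((((hz t).inner ℝ (hz' t)).sub ((hw t).inner ℝ (hw' t))).const_mul 2).congr_deriv ?_
      simp only [real_inner_smul_right, real_inner_self_eq_norm_sq]
      ring
  have hcont : Continuous fun t => 2 * |κ| + ‖z' t‖ ^ 2 + ‖w' t‖ ^ 2 := by
    have hz'c : Continuous z' := continuous_iff_continuousAt.2 fun t => (hz' t).continuousAt
    have hw'c : Continuous w' := continuous_iff_continuousAt.2 fun t => (hw' t).continuousAt
    fun_prop
  have hle : ∀ t, ‖2 * (‖z' t‖ ^ 2 + (Λ t - κ) * ‖z t‖ ^ 2 - ‖w' t‖ ^ 2 + (Λ t + κ) * ‖w t‖ ^ 2)‖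
      ≤ (2 * |κ| + ‖z' t‖ ^ 2 + ‖w' t‖ ^ 2) * ‖‖z t‖ ^ 2 - ‖w t‖ ^ 2 - 4‖ := fun t => by
    rw [Real.norm_eq_abs, Real.norm_eq_abs]
    have hP := sq_nonneg ‖z' t‖
    have hQ := sq_nonneg ‖w' t‖
    by_cases hS : ‖z t‖ ^ 2 + ‖w t‖ ^ 2 = 0
    · -- `hΛ` is void where `z = w = 0` (`Lam` divides by `0` there), but then the distance
      -- `‖z‖² - ‖w‖² - 4 = -4` to the constraint is not small
      have hz0 : ‖z t‖ ^ 2 = 0 := by nlinarith [sq_nonneg ‖z t‖, sq_nonneg ‖w t‖]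
      have hw0 : ‖w t‖ ^ 2 = 0 := by linarith
      rw [hz0, hw0, abs_of_neg (by norm_num : (0 : ℝ) - 0 - 4 < 0), abs_le]
      constructor <;> nlinarith [abs_nonneg κ]
    · have hrhs : 2 * (‖z' t‖ ^ 2 + (Λ t - κ) * ‖z t‖ ^ 2 - ‖w' t‖ ^ 2 + (Λ t + κ) * ‖w t‖ ^ 2)
          = -2 * κ * (‖z t‖ ^ 2 - ‖w t‖ ^ 2 - 4) := by linear_combination 2 * hΛ t hS
      rw [hrhs, abs_mul, abs_mul, abs_neg, abs_two]
      gcongr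
      nlinarith
  have := eq_zero_of_norm_deriv2_le_mul (t₀ := t₀) hD hD' hcont hle (by simp [h₀])
    (by rw [h₀', sub_self, mul_zero]) t
  linarith

theorem exists_eq_div_sq_of_norm_sq_sub_norm_sq_eq_four (hz : ∀ t, HasDerivAt z (z' t) t)
    (hz' : ∀ t, HasDerivAt z' ((Λ t - κ) • z t) t) (hw : ∀ t, HasDerivAt w (w' t) t)
    (hw' : ∀ t, HasDerivAt w' ((-Λ t - κ) • w t) t)
    (hΛ : ∀ t, ‖z t‖ ^ 2 + ‖w t‖ ^ 2 ≠ 0 →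
      Λ t * (‖z t‖ ^ 2 + ‖w t‖ ^ 2) = 4 * κ - ‖z' t‖ ^ 2 + ‖w' t‖ ^ 2)
    (hD : ∀ t, ‖z t‖ ^ 2 - ‖w t‖ ^ 2 = 4) :
    ∃ c : ℝ, ∀ t, Λ t = c / (‖z t‖ ^ 2 + ‖w t‖ ^ 2) ^ 2 := by
  have hS : ∀ t, ‖z t‖ ^ 2 + ‖w t‖ ^ 2 ≠ 0 := fun t => by
    nlinarith [hD t, sq_nonneg ‖w t‖]
  have hinner : ∀ t, inner ℝ (z t) (z' t) = inner ℝ (w t) (w' t) := fun t => by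
    have h : HasDerivAt (fun t => ‖z t‖ ^ 2 - ‖w t‖ ^ 2)
        (2 * inner ℝ (z t) (z' t) - 2 * inner ℝ (w t) (w' t)) t :=
      (hz t).norm_sq.sub (hw t).norm_sq
    rw [show (fun t => ‖z t‖ ^ 2 - ‖w t‖ ^ 2) = fun _ => 4 from funext hD] at h
    linarith [h.unique (hasDerivAt_const t 4)]
  have hconserved : ∀ t, HasDerivAt
      (fun t => (‖z' t‖ ^ 2 - ‖w' t‖ ^ 2 - 4 * κ) * (‖z t‖ ^ 2 + ‖w t‖ ^ 2)) 0 t := fun t => by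
    refine ((((hz' t).norm_sq.sub (hw' t).norm_sq).sub_const (4 * κ)).mul
      ((hz t).norm_sq.add (hw t).norm_sq)).congr_deriv ?_
    simp only [Pi.add_apply, Pi.sub_apply, real_inner_smul_right, real_inner_comm (z t),
      real_inner_comm (w t)]
    linear_combination (4 * inner ℝ (z t) (z' t)) * hΛ t (hS t)
      - (2 * (Λ t + κ) * (‖z t‖ ^ 2 + ‖w t‖ ^ 2) + 2 * (‖z' t‖ ^ 2 - ‖w' t‖ ^ 2 - 4 * κ))
        * hinner t
  refine ⟨-((‖z' 0‖ ^ 2 - ‖w' 0‖ ^ 2 - 4 * κ) * (‖z 0‖ ^ 2 + ‖w 0‖ ^ 2)), fun t => ?_⟩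
  rw [← is_const_of_deriv_eq_zero (fun t => (hconserved t).differentiableAt)
    (fun t => (hconserved t).deriv) t 0, eq_div_iff (pow_ne_zero 2 (hS t))]
  linear_combination (‖z t‖ ^ 2 + ‖w t‖ ^ 2) * hΛ t (hS t)

end Decoupled

section Solution

open Function

variable {κ : ℝ} {A : ℝ → M2}

theorem hasDerivAt_clm_comp_of_contDiff (hA : ContDiff ℝ 2 A) (L : M2 →L[ℝ] ℂ) (t : ℝ) :
    HasDerivAt (fun t => L (A t)) (L (deriv A t)) t :=
  L.hasFDerivAt.comp_hasDerivAt t ((hA.differentiable (by norm_num) t).hasDerivAt)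

theorem hasDerivAt_clm_comp_deriv_of_contDiff (hA : ContDiff ℝ 2 A) (L : M2 →L[ℝ] ℂ) (t : ℝ) :
    HasDerivAt (fun t => L (deriv A t)) (L (deriv (deriv A) t)) t :=
  L.hasFDerivAt.comp_hasDerivAt t (hA.differentiable_deriv_two t).hasDerivAt

theorem hasDerivAt_confPart_deriv (hA : ContDiff ℝ 2 A)
    (hode : ∀ t, deriv (deriv A) t + κ • A t = Lam κ (A t) (deriv A t) • cofm (A t)) (t : ℝ) :
    HasDerivAt (fun t => confPart (deriv A t))
      ((Lam κ (A t) (deriv A t) - κ) • confPart (A t)) t := by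
  convert hasDerivAt_clm_comp_deriv_of_contDiff hA confPart t using 1
  rw [eq_sub_of_add_eq (hode t), map_sub, map_smul, map_smul, confPart_cofm, sub_smul]

theorem hasDerivAt_anticonfPart_deriv (hA : ContDiff ℝ 2 A)
    (hode : ∀ t, deriv (deriv A) t + κ • A t = Lam κ (A t) (deriv A t) • cofm (A t)) (t : ℝ) :
    HasDerivAt (fun t => anticonfPart (deriv A t))
      ((-Lam κ (A t) (deriv A t) - κ) • anticonfPart (A t)) t := by
  convert hasDerivAt_clm_comp_deriv_of_contDiff hA anticonfPart t using 1
  rw [eq_sub_of_add_eq (hode t), map_sub, map_smul, map_smul, anticonfPart_cofm, sub_smul,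
    smul_neg, neg_smul]

theorem det_eq_one_of_contDiff (hA : ContDiff ℝ 2 A)
    (hode : ∀ t, deriv (deriv A) t + κ • A t = Lam κ (A t) (deriv A t) • cofm (A t))
    (hdet : (A 0).det = 1) (htan : mip (deriv A 0) (cofm (A 0)) = 0) (t : ℝ) : (A t).det = 1 := by
  have h := norm_sq_sub_norm_sq_eq_four (t₀ := 0) (hasDerivAt_clm_comp_of_contDiff hA confPart)
    (hasDerivAt_confPart_deriv hA hode) (hasDerivAt_clm_comp_of_contDiff hA anticonfPart)
    (hasDerivAt_anticonfPart_deriv hA hode) (fun t => Lam_mul_eq (deriv A t))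
    (by rw [det_eq_norm_sq_sub_norm_sq] at hdet; linarith)
    (by rw [mip_cofm] at htan; linarith) t
  rw [det_eq_norm_sq_sub_norm_sq, h]
  norm_num

theorem exists_rotation_of_periodic_fnorm (hA : ContDiff ℝ 2 A)
    (hode : ∀ t, deriv (deriv A) t + κ • A t = Lam κ (A t) (deriv A t) • cofm (A t))
    (hdet : (A 0).det = 1) (htan : mip (deriv A 0) (cofm (A 0)) = 0) {T : ℝ}
    (hper : Periodic (fun t => fnorm (A t)) T) :
    ∃ u₁ u₂ : ℂ, ‖u₁‖ = 1 ∧ ‖u₂‖ = 1 ∧ ∀ t, confPart (A (t + T)) = u₁ * confPart (A t) ∧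
      anticonfPart (A (t + T)) = u₂ * anticonfPart (A t) := by
  have hz := hasDerivAt_clm_comp_of_contDiff hA confPart
  have hw := hasDerivAt_clm_comp_of_contDiff hA anticonfPart
  have hz' := hasDerivAt_confPart_deriv hA hode
  have hw' := hasDerivAt_anticonfPart_deriv hA hode
  have hD : ∀ t, ‖confPart (A t)‖ ^ 2 - ‖anticonfPart (A t)‖ ^ 2 = 4 := fun t => by
    linarith [det_eq_norm_sq_sub_norm_sq (A t), det_eq_one_of_contDiff hA hode hdet htan t]
  have hS : Periodic (fun t => ‖confPart (A t)‖ ^ 2 + ‖anticonfPart (A t)‖ ^ 2) T := fun t => by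
    have h := congrArg (· ^ 2) (hper t)
    simp only [fnorm] at h
    rw [Real.sq_sqrt (by rw [mip_self]; positivity), Real.sq_sqrt (by rw [mip_self]; positivity),
      mip_self, mip_self] at h
    linarith
  obtain ⟨c, hc⟩ := exists_eq_div_sq_of_norm_sq_sub_norm_sq_eq_four hz hz' hw hw'
    (fun t => Lam_mul_eq (deriv A t)) hD
  have hΛT : Periodic (fun t => Lam κ (A t) (deriv A t)) T := fun t => by
    simp only [hc, hS t]
  have hΛc : Continuous (fun t => Lam κ (A t) (deriv A t)) := by
    simp only [hc]
    have hAc : Continuous A := hA.continuous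
    refine continuous_const.div (by fun_prop) fun t => pow_ne_zero 2 ?_
    nlinarith [hD t, sq_nonneg ‖anticonfPart (A t)‖]
  have hnorm : ∀ {f : ℝ → ℂ}, Periodic (fun t => ‖f t‖ ^ 2) T → Periodic (fun t => ‖f t‖) T :=
    fun h t => (pow_left_inj₀ (norm_nonneg _) (norm_nonneg _) two_ne_zero).1 (h t)
  obtain ⟨u₁, hu₁, h₁⟩ := exists_norm_eq_one_mul_of_periodic hz hz' (hΛc.sub continuous_const)
    (fun t => congrArg (· - κ) (hΛT t)) (hnorm fun t => by linarith [hS t, hD t, hD (t + T)])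
  obtain ⟨u₂, hu₂, h₂⟩ := exists_norm_eq_one_mul_of_periodic hw hw' (hΛc.neg.sub continuous_const)
    (fun t => congrArg (-· - κ) (hΛT t)) (hnorm fun t => by linarith [hS t, hD t, hD (t + T)])
  exact ⟨u₁, u₂, hu₁, hu₂, fun t => ⟨h₁ t, h₂ t⟩⟩

end Solution

theorem recurrence_general (κ : ℝ) (A₀ B₀ : M2)
    (hdet : A₀.det = 1) (htan : mip B₀ (cofm A₀) = 0)
    (A : ℝ → M2) (hA : ContDiff ℝ 2 A)
    (hA0 : A 0 = A₀) (hB0 : deriv A 0 = B₀)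
    (hode : ∀ t : ℝ, deriv (deriv A) t + κ • A t
      = Lam κ (A t) (deriv A t) • cofm (A t))
    (T : ℝ)
    (hper : Function.Periodic (fun t => fnorm (A t)) T) :
    ∀ N : ℕ, 0 < N → ∃ ℓ : ℕ, 1 ≤ ℓ ∧ ℓ ≤ N ^ 2 ∧
      ∀ t : ℝ, fnorm (A (2 * ℓ * T + t) - A t) ≤ 8 * Real.pi * fnorm (A t) / N := by
  subst hA0 hB0
  obtain ⟨u₁, u₂, hu₁, hu₂, hrot⟩ := exists_rotation_of_periodic_fnorm hA hode hdet htan hper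
  intro N hN
  obtain ⟨ℓ, hℓ₁, hℓN, hε₁, hε₂⟩ := exists_pow_sub_one_norm_le hu₁ hu₂ hN
  refine ⟨ℓ, hℓ₁, hℓN, fun t => ?_⟩
  have hconf := norm_apply_two_mul_add_sub_le (f := fun s => confPart (A s)) hu₁
    (fun s => (hrot s).1) hε₁ t
  have hanti := norm_apply_two_mul_add_sub_le (f := fun s => anticonfPart (A s)) hu₂
    (fun s => (hrot s).2) hε₂ t
  rw [← map_sub] at hconf hanti
  calc fnorm (A (2 * ℓ * T + t) - A t) ≤ 2 * (2 * Real.pi / N) * fnorm (A t) :=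
        fnorm_le_of_norm_parts_le (by positivity) hconf hanti
    _ = 4 * Real.pi * fnorm (A t) / N := by ring
    _ ≤ 8 * Real.pi * fnorm (A t) / N := by
      have hnonneg : 0 ≤ fnorm (A t) := Real.sqrt_nonneg _
      gcongr
      linarith [Real.pi_pos]

/-- recurrence of solutions with |A(t)| nonconstant and T-periodic. -/
theorem recurrence (κ : ℝ) (hκ : 0 ≤ κ) (A₀ B₀ : M2)
    (hdet : A₀.det = 1) (htan : mip B₀ (cofm A₀) = 0)
    (A : ℝ → M2) (hA : ContDiff ℝ 2 A)
    (hA0 : A 0 = A₀) (hB0 : deriv A 0 = B₀)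
    (hode : ∀ t : ℝ, deriv (deriv A) t + κ • A t
      = Lam κ (A t) (deriv A t) • cofm (A t))
    (T : ℝ) (hT : 0 < T)
    (hper : Function.Periodic (fun t => fnorm (A t)) T)
    (hnonconst : ∃ s t : ℝ, fnorm (A s) ≠ fnorm (A t)) :
    ∀ N : ℕ, 0 < N → ∃ ℓ : ℕ, 1 ≤ ℓ ∧ ℓ ≤ N ^ 2 ∧
      ∀ t : ℝ, fnorm (A (2 * ℓ * T + t) - A t) ≤ 8 * Real.pi * fnorm (A t) / N :=
  recurrence_general κ A₀ B₀ hdet htan A hA hA0 hB0 hode T hper
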